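/- arXiv:2506.14974 — 5 statements merged into one kernel-verified Lean document; each statement's English description precedes it below -/
import Mathlib

section
/- Let G be a directed graph on n vertices and let P1, P2 be two vertex-disjoint directed paths such that every strongly connected component of G minus the vertices of P1 and P2 has at most αn vertices, for some α with 1/2 ≤ α < 1. Then there exists a single directed path P3 in G such that every strongly connected component of G minus the vertices of P3 has at most αn vertices. -/
/-- Reachability in the directed graph `G` avoiding the vertex set `S`. -/
def DReach {V : Type} (G : V → V → Prop) (S : Set V) (u v : V) : Prop :=
  Relation.ReflTransGen (fun a b => G a b ∧ a ∉ S ∧ b ∉ S) u v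

/-- `S` is an α-separator of the digraph `G`: every strongly connected component of
`G − S` has at most `α · n` vertices. -/
def DSep {V : Type} [Fintype V] (G : V → V → Prop) (S : Set V) (α : ℚ) : Prop :=
  ∀ v : V, v ∉ S →
    (({w : V | DReach G S v w ∧ DReach G S w v}.ncard : ℚ)) ≤ α * (Fintype.card V : ℚ)

/-- `p` is a (nonempty) simple directed path in `G`. -/
def DIsPath {V : Type} (G : V → V → Prop) (p : List V) : Prop :=
  p ≠ [] ∧ p.Nodup ∧ p.Chain' G

/-!
Shrink `P₁` from its end and `P₂` from its start for as long as their union remains an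
α-separator. When neither shrinking is possible, deleting the last vertex `t` of `P₁` from the
separator creates a strong component with more than `αn` vertices; it must contain `t`, since
otherwise it would already be a strong component of `G − (P₁ ∪ P₂)`. Likewise the first vertex
`h` of `P₂` lies in a strong component with more than `αn` vertices once it is deleted. As
`α ≥ 1/2`, these two components share a vertex, so `t` reaches `h` avoiding all other vertices of
`P₁` and `P₂`. Shortcutting such a walk to a simple path joins `P₁` and `P₂` into a single path,
and a superset of an α-separator is again an α-separator.
-/

open Relation

theorem Relation.ReflTransGen.exists_nodup_isChain {α : Type*} {r : α → α → Prop} {a b : α}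
    (h : ReflTransGen r a b) :
    ∃ l, (a :: l).Nodup ∧ (a :: l).IsChain r ∧ (a :: l).getLast (List.cons_ne_nil _ _) = b := by
  induction h using ReflTransGen.head_induction_on with
  | refl => exact ⟨[], List.nodup_singleton _, .singleton _, rfl⟩
  | @head a c hac _ ih =>
    obtain ⟨l, hnd, hch, hlast⟩ := ih
    by_cases ha : a ∈ c :: l
    · obtain ⟨s, t, hst⟩ := List.append_of_mem ha
      rw [hst] at hnd hch
      exact ⟨t, hnd.sublist (List.sublist_append_right _ _), hch.right_of_append,
        by simp [← hlast, hst]⟩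
    · exact ⟨c :: l, List.nodup_cons.2 ⟨ha, hnd⟩, hch.cons_cons hac,
        by rwa [List.getLast_cons_cons]⟩

theorem Set.inter_nonempty_of_card_lt_ncard_add_ncard {α : Type*} [Finite α] {s t : Set α}
    (h : Nat.card α < s.ncard + t.ncard) : (s ∩ t).Nonempty := by
  rw [Set.nonempty_iff_ne_empty]
  intro hst
  have hunion := Set.ncard_union_add_ncard_inter s t
  rw [hst, Set.ncard_empty, add_zero] at hunion
  have := Set.ncard_le_card (s ∪ t)
  omega

section Digraph

variable {V : Type} {G : V → V → Prop}

def dscc (G : V → V → Prop) (S : Set V) (v : V) : Set V :=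
  {w | DReach G S v w ∧ DReach G S w v}

theorem mem_dscc_self (G : V → V → Prop) (S : Set V) (v : V) : v ∈ dscc G S v :=
  ⟨.refl, .refl⟩

theorem DReach.anti {S T : Set V} {u v : V} (hST : S ⊆ T) (h : DReach G T u v) :
    DReach G S u v :=
  ReflTransGen.mono (fun _ _ e => ⟨e.1, fun ha => e.2.1 (hST ha), fun hb => e.2.2 (hST hb)⟩) _ _ h

theorem DReach.of_forall_between {S S' : Set V} {u w : V} (h : DReach G S' u w)
    (hS : ∀ z, DReach G S' u z → DReach G S' z w → z ∉ S) : DReach G S u w := by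
  induction h with
  | refl => exact .refl
  | @tail c w huc e ih =>
    exact (ih fun z huz hzc => hS z huz (hzc.tail e)).tail
      ⟨e.1, hS c huc (.single e), hS w (huc.tail e) .refl⟩

theorem notMem_of_mem_dscc {S : Set V} {v w : V} (hv : v ∉ S) (hw : w ∈ dscc G S v) : w ∉ S := by
  rcases ReflTransGen.cases_tail hw.1 with rfl | ⟨c, _, e⟩
  · exact hv
  · exact e.2.2

theorem dscc_subset_dscc_of_disjoint {S S' : Set V} {v : V} (h : Disjoint (dscc G S' v) S) :
    dscc G S' v ⊆ dscc G S v := fun _ ⟨hvw, hwv⟩ =>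
  ⟨hvw.of_forall_between fun _ hvz hzw => Set.disjoint_left.1 h ⟨hvz, ReflTransGen.trans hzw hwv⟩,
    hwv.of_forall_between fun _ hwz hzv => Set.disjoint_left.1 h ⟨ReflTransGen.trans hvw hwz, hzv⟩⟩

variable [Fintype V] {α : ℚ}

theorem DSep.mono {S T : Set V} (hST : S ⊆ T) (h : DSep G S α) : DSep G T α := by
  intro v hv
  have hsub : dscc G T v ⊆ dscc G S v := fun _ hw => ⟨hw.1.anti hST, hw.2.anti hST⟩
  exact le_trans (by exact_mod_cast Set.ncard_le_ncard hsub) (h v fun hvS => hv (hST hvS))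

theorem DSep.not_disjoint_dscc {S S' : Set V} {v : V} (hsep : DSep G S α)
    (hbig : α * Fintype.card V < (dscc G S' v).ncard) : ¬ Disjoint (dscc G S' v) S := by
  intro h
  have hv : v ∉ S := Set.disjoint_left.1 h (mem_dscc_self G S' v)
  have hle : ((dscc G S' v).ncard : ℚ) ≤ (dscc G S v).ncard := by
    exact_mod_cast Set.ncard_le_ncard (dscc_subset_dscc_of_disjoint h)
  exact hbig.not_ge (hle.trans (hsep v hv))

theorem DSep.exists_large_dscc_mem {S Sa : Set V} {a : V} (hsep : DSep G S α)
    (ha : S ⊆ insert a Sa) (hA : ¬ DSep G Sa α) :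
    ∃ v, a ∈ dscc G Sa v ∧ α * Fintype.card V < (dscc G Sa v).ncard := by
  simp only [DSep, not_forall, not_le] at hA
  obtain ⟨v, hv, hbig⟩ := hA
  obtain ⟨z, hz, hzS⟩ := Set.not_disjoint_iff.1 (hsep.not_disjoint_dscc hbig)
  rcases ha hzS with rfl | hzSa
  · exact ⟨v, hz, hbig⟩
  · exact absurd hzSa (notMem_of_mem_dscc hv hz)

theorem DSep.dReach_of_not_dSep {S Sa Sb : Set V} {a b : V} (hα : 1/2 ≤ α) (hsep : DSep G S α)
    (ha : S ⊆ insert a Sa) (hb : S ⊆ insert b Sb) (hA : ¬ DSep G Sa α) (hB : ¬ DSep G Sb α) :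
    DReach G (Sa ∩ Sb) a b := by
  obtain ⟨u, hau, hu⟩ := hsep.exists_large_dscc_mem ha hA
  obtain ⟨w, hbw, hw⟩ := hsep.exists_large_dscc_mem hb hB
  -- two components of more than `n / 2` vertices each must meet
  obtain ⟨x, hxu, hxw⟩ : (dscc G Sa u ∩ dscc G Sb w).Nonempty := by
    apply Set.inter_nonempty_of_card_lt_ncard_add_ncard
    have hn : (Fintype.card V : ℚ) ≤ 2 * α * Fintype.card V := by
      nlinarith [(Fintype.card V).cast_nonneg (α := ℚ)]
    rw [Nat.card_eq_fintype_card]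
    exact_mod_cast (by linarith :
      (Fintype.card V : ℚ) < (dscc G Sa u).ncard + (dscc G Sb w).ncard)
  have hax : DReach G Sa a x := ReflTransGen.trans hau.2 hxu.1
  have hxb : DReach G Sb x b := ReflTransGen.trans hxw.2 hbw.1
  exact ReflTransGen.trans (hax.anti Set.inter_subset_left) (hxb.anti Set.inter_subset_right)

end Digraph

section Paths

variable {V : Type} {G : V → V → Prop}

theorem DIsPath.left_of_append {l₁ l₂ : List V} (h : DIsPath G (l₁ ++ l₂)) (hl₁ : l₁ ≠ []) :
    DIsPath G l₁ :=
  ⟨hl₁, h.2.1.sublist (List.sublist_append_left _ _), h.2.2.left_of_append⟩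

theorem DIsPath.right_of_append {l₁ l₂ : List V} (h : DIsPath G (l₁ ++ l₂)) (hl₂ : l₂ ≠ []) :
    DIsPath G l₂ :=
  ⟨hl₂, h.2.1.sublist (List.sublist_append_right _ _), h.2.2.right_of_append⟩

theorem DIsPath.exists_join {q₁ q₂ : List V} {t h : V} (hp₁ : DIsPath G (q₁ ++ [t]))
    (hp₂ : DIsPath G (h :: q₂)) (hdisj : ∀ v, v ∈ q₁ ++ [t] → v ∉ h :: q₂)
    (hr : DReach G {v | v ∈ q₁ ∨ v ∈ q₂} t h) :
    ∃ p, DIsPath G p ∧ {v | v ∈ q₁ ++ [t] ∨ v ∈ h :: q₂} ⊆ {v | v ∈ p} := by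
  obtain ⟨l, hnd, hch, hlast⟩ := ReflTransGen.exists_nodup_isChain hr
  have hth : t ≠ h := fun e => hdisj t (by simp) (by simp [e])
  obtain ⟨m, rfl⟩ : ∃ m, l = m ++ [h] := by
    rcases List.eq_nil_or_concat' l with rfl | ⟨m, b, rfl⟩
    · exact absurd hlast hth
    · exact ⟨m, by simp_all⟩
  have htq : ¬ (t ∈ q₁ ∨ t ∈ q₂) := by
    have hnd₁ := hp₁.2.1
    have hdisj_t := hdisj t (by simp)
    grind [List.nodup_append]
  have hm : ∀ x ∈ m, ¬ (x ∈ q₁ ∨ x ∈ q₂) := fun x hx =>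
    hch.cons_induction (fun y => ¬ (y ∈ q₁ ∨ y ∈ q₂)) _ (fun _ _ e _ => e.2.2) htq x (by simp [hx])
  refine ⟨q₁ ++ t :: (m ++ h :: q₂), ⟨by simp, ?_, ?_⟩, fun v hv => by grind⟩
  · have hnd₁ := hp₁.2.1
    have hnd₂ := hp₂.2.1
    grind [List.nodup_append, List.nodup_cons]
  · have hleft : (q₁ ++ [t] ++ m ++ [h]).IsChain G := by
      simpa using hp₁.2.2.append_overlap (hch.imp fun _ _ e => e.1) (List.cons_ne_nil _ _)
    show (q₁ ++ t :: (m ++ h :: q₂)).IsChain G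
    simpa using hleft.append_overlap hp₂.2.2 (List.cons_ne_nil _ _)

end Paths

theorem DSep.exists_path_of_two_paths {V : Type} [Fintype V] {G : V → V → Prop} {α : ℚ}
    (hα : 1/2 ≤ α) (p₁ p₂ : List V) (hp₁ : DIsPath G p₁) (hp₂ : DIsPath G p₂)
    (hdisj : ∀ v, v ∈ p₁ → v ∉ p₂) (hsep : DSep G {v | v ∈ p₁ ∨ v ∈ p₂} α) :
    ∃ p, DIsPath G p ∧ DSep G {v | v ∈ p} α := by
  obtain ⟨q₁, t, rfl⟩ := (List.eq_nil_or_concat' p₁).resolve_left hp₁.1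
  obtain ⟨h, q₂, rfl⟩ := List.exists_cons_of_ne_nil hp₂.1
  by_cases hA : DSep G {v | v ∈ q₁ ∨ v ∈ h :: q₂} α
  · rcases eq_or_ne q₁ [] with rfl | hq₁
    · exact ⟨h :: q₂, hp₂, hA.mono fun v hv => by simpa using hv⟩
    · exact DSep.exists_path_of_two_paths hα q₁ (h :: q₂) (hp₁.left_of_append hq₁) hp₂
        (fun v hv => hdisj v (by simp [hv])) hA
  by_cases hB : DSep G {v | v ∈ q₁ ++ [t] ∨ v ∈ q₂} α
  · rcases eq_or_ne q₂ [] with rfl | hq₂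
    · exact ⟨q₁ ++ [t], hp₁, hB.mono fun v hv => by simpa using hv⟩
    · exact DSep.exists_path_of_two_paths hα (q₁ ++ [t]) q₂ hp₁
        (hp₂.right_of_append (l₁ := [h]) hq₂)
        (fun v hv hv₂ => hdisj v hv (by simp [hv₂])) hB
  have hr : DReach G {v | v ∈ q₁ ∨ v ∈ q₂} t h :=
    (hsep.dReach_of_not_dSep hα (fun v hv => by grind)
      (fun v hv => by grind) hA hB).anti fun v hv => by grind
  obtain ⟨p, hp, hsub⟩ := hp₁.exists_join hp₂ hdisj hr
  exact ⟨p, hp, hsep.mono hsub⟩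
termination_by p₁.length + p₂.length

theorem stmt0_general {V : Type} [Fintype V] (G : V → V → Prop) (α : ℚ)
    (hα1 : 1/2 ≤ α) (p1 p2 : List V)
    (hp1 : DIsPath G p1) (hp2 : DIsPath G p2)
    (hdisj : ∀ v, v ∈ p1 → v ∉ p2)
    (hsep : DSep G {v | v ∈ p1 ∨ v ∈ p2} α) :
    ∃ p3 : List V, DIsPath G p3 ∧ DSep G {v | v ∈ p3} α :=
  hsep.exists_path_of_two_paths hα1 p1 p2 hp1 hp2 hdisj

theorem stmt0 {V : Type} [Fintype V] (G : V → V → Prop) (α : ℚ)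
    (hα1 : 1/2 ≤ α) (hα2 : α < 1) (p1 p2 : List V)
    (hp1 : DIsPath G p1) (hp2 : DIsPath G p2)
    (hdisj : ∀ v, v ∈ p1 → v ∉ p2)
    (hsep : DSep G {v | v ∈ p1 ∨ v ∈ p2} α) :
    ∃ p3 : List V, DIsPath G p3 ∧ DSep G {v | v ∈ p3} α :=
  stmt0_general G α hα1 p1 p2 hp1 hp2 hdisj hsep
end

section
/- Let G be a graph and T a tree decomposition of G of width at most k. Then there exists a bag B of T such that every connected component of G − B has at most |V(G)|/2 vertices. In particular, G has a 1/2-separator consisting of at most k+1 vertices. -/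
/-- Reachability in the graph `G` avoiding the vertex set `S`. -/
def UReach {V : Type} (G : SimpleGraph V) (S : Set V) (u v : V) : Prop :=
  Relation.ReflTransGen (fun a b => G.Adj a b ∧ a ∉ S ∧ b ∉ S) u v

/-- `S` is an α-separator of `G`: every connected component of `G − S`
has at most `α · |V(G)|` vertices. -/
def USep {V : Type} [Fintype V] (G : SimpleGraph V) (S : Set V) (α : ℚ) : Prop :=
  ∀ v : V, v ∉ S → (({w : V | UReach G S v w}.ncard : ℚ)) ≤ α * (Fintype.card V : ℚ)

/-- `(T, bags)` is a tree decomposition of `G`. -/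
def IsTreeDecomp {V ι : Type} (G : SimpleGraph V) (T : SimpleGraph ι)
    (bags : ι → Finset V) : Prop :=
  T.IsTree ∧
  (∀ v : V, ∃ i, v ∈ bags i) ∧
  (∀ u v : V, G.Adj u v → ∃ i, u ∈ bags i ∧ v ∈ bags i) ∧
  (∀ (v : V) (i j : ι), v ∈ bags i → v ∈ bags j →
    ∀ (p : T.Walk i j), p.IsPath → ∀ k ∈ p.support, v ∈ bags k)

/-!
Pick for every vertex `v` a node `t v` whose bag contains `v`, and let `c` minimise
`∑ v, dist c (t v)`. Stepping from `c` to a neighbour `x` shortens the distance by one for every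
vertex homed in the branch of `T - c` containing `x` and lengthens it by at most one for all
others, so minimality forces every branch at `c` to hold at most half of the vertices. By the
connectivity condition of the decomposition, the homes of a component of `G - bags c` all lie in one
branch at `c`, so `bags c` is the required separator.
-/

open SimpleGraph Finset

namespace UReach

variable {V : Type} {G : SimpleGraph V} {S : Set V} {u v : V}

lemma of_walk (p : G.Walk u v) (hp : ∀ y ∈ p.support, y ∉ S) : UReach G S u v := by
  induction p with
  | nil => exact .refl
  | cons h q ih =>
    exact .head ⟨h, hp _ (by simp), hp _ (by simp)⟩ (ih fun y hy => hp y (by simp [hy]))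

lemma exists_walk (h : UReach G S u v) (hu : u ∉ S) :
    ∃ p : G.Walk u v, ∀ y ∈ p.support, y ∉ S := by
  induction h with
  | refl => exact ⟨.nil, by simpa using hu⟩
  | tail _ hstep ih =>
    obtain ⟨p, hp⟩ := ih
    refine ⟨p.concat hstep.1, fun y hy => ?_⟩
    rw [Walk.support_concat, List.mem_append, List.mem_singleton] at hy
    rcases hy with hy | rfl
    · exact hp y hy
    · exact hstep.2.2

end UReach

namespace SimpleGraph

variable {ι : Type} {T : SimpleGraph ι}

lemma IsAcyclic.length_eq_dist_of_isPath (hT : T.IsAcyclic) {a b : ι} {p : T.Walk a b}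
    (hp : p.IsPath) : p.length = T.dist a b := by
  obtain ⟨q, hq, hlen⟩ := p.reachable.exists_path_of_dist
  have hpq : p = q :=
    congrArg Subtype.val ((hT.subsingleton_path a b).elim ⟨p, hp⟩ ⟨q, hq⟩)
  rw [hpq, hlen]

lemma exists_adj_uReach_of_reachable {c j : ι} (hr : T.Reachable c j) (hj : j ≠ c) :
    ∃ x, T.Adj c x ∧ UReach T {c} x j := by
  obtain ⟨p, hp, -⟩ := hr.exists_path_of_dist
  cases p with
  | nil => exact absurd rfl hj
  | cons hadj q =>
    rw [Walk.cons_isPath_iff] at hp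
    exact ⟨_, hadj, UReach.of_walk q fun y hy hyc => hp.2 (hyc ▸ hy)⟩

lemma IsTree.dist_eq_dist_add_one_of_uReach (hT : T.IsTree) {c x y : ι} (hadj : T.Adj c x)
    (h : UReach T {c} x y) : T.dist c y = T.dist x y + 1 := by
  classical
  obtain ⟨p, hp⟩ := h.exists_walk hadj.ne'
  have hc : c ∉ p.bypass.support := fun hc => hp c (p.support_bypass_subset_support hc) rfl
  have hpath := p.bypass_isPath
  rw [← hT.isAcyclic.length_eq_dist_of_isPath (hpath.cons hc (h := hadj)),
    ← hT.isAcyclic.length_eq_dist_of_isPath hpath, Walk.length_cons]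

lemma IsTree.sum_dist_add_two_mul_card_le {V : Type} [Fintype V] (hT : T.IsTree) (t : V → ι)
    {c x : ι} (hadj : T.Adj c x) [DecidablePred fun v => UReach T {c} x (t v)] :
    ∑ v, T.dist x (t v) + 2 * #{v | UReach T {c} x (t v)} ≤
      ∑ v, T.dist c (t v) + Fintype.card V := by
  have hpointwise : ∀ v, T.dist x (t v) + 2 * (if UReach T {c} x (t v) then 1 else 0) ≤
      T.dist c (t v) + 1 := by
    intro v
    split_ifs with hv
    · have hcloser := hT.dist_eq_dist_add_one_of_uReach hadj hv
      omega
    · have htriangle := hT.connected.dist_triangle (u := x) (v := c) (w := t v)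
      have hxc := dist_eq_one_iff_adj.mpr hadj.symm
      omega
  have hsum := Finset.sum_le_sum fun v (_ : v ∈ univ) => hpointwise v
  simpa only [sum_add_distrib, ← mul_sum, sum_boole, Nat.cast_id, sum_const, card_univ,
    smul_eq_mul, mul_one] using hsum

lemma IsTree.exists_centroid {V : Type} [Fintype V] (hT : T.IsTree) (t : V → ι) :
    ∃ c, ∀ j ≠ c, 2 * {v | UReach T {c} j (t v)}.ncard ≤ Fintype.card V := by
  classical
  have : Nonempty ι := hT.connected.nonempty
  obtain ⟨c, hmin⟩ : ∃ c, ∀ i, ∑ v, T.dist c (t v) ≤ ∑ v, T.dist i (t v) :=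
    ⟨_, fun i => Function.argmin_le (fun i => ∑ v, T.dist i (t v)) i⟩
  refine ⟨c, fun j hj => ?_⟩
  obtain ⟨x, hadj, hxj⟩ := exists_adj_uReach_of_reachable (hT.connected c j) hj
  have hbranch : {v | UReach T {c} j (t v)} ⊆ {v | UReach T {c} x (t v)} :=
    fun v hv => hxj.trans hv
  have hsum := hT.sum_dist_add_two_mul_card_le t hadj
  have hcard : {v | UReach T {c} x (t v)}.ncard = #{v | UReach T {c} x (t v)} := by
    rw [Set.ncard_eq_toFinset_card', Set.toFinset_ofPred]
  have hmono := Set.ncard_le_ncard hbranch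
  have hminx := hmin x
  omega

end SimpleGraph

namespace IsTreeDecomp

variable {V ι : Type} {G : SimpleGraph V} {T : SimpleGraph ι} {bags : ι → Finset V}

lemma uReach_of_notMem_bags (hdec : IsTreeDecomp G T bags) {u : V} {a b c : ι}
    (hc : u ∉ bags c) (ha : u ∈ bags a) (hb : u ∈ bags b) : UReach T {c} a b := by
  obtain ⟨p, hp, -⟩ := (hdec.1.connected a b).exists_path_of_dist
  exact UReach.of_walk p fun y hy hyc => hc (hyc ▸ hdec.2.2.2 u a b ha hb p hp y hy)

lemma uReach_of_uReach (hdec : IsTreeDecomp G T bags) {c a b : ι} {v w : V}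
    (h : UReach G (bags c) v w) (hv : v ∉ bags c) (ha : v ∈ bags a) (hb : w ∈ bags b) :
    UReach T {c} a b := by
  induction h generalizing b with
  | refl => exact hdec.uReach_of_notMem_bags hv ha hb
  | tail _ hstep ih =>
    obtain ⟨m, hum, hwm⟩ := hdec.2.2.1 _ _ hstep.1
    exact (ih hum).trans (hdec.uReach_of_notMem_bags (by simpa using hstep.2.2) hwm hb)

end IsTreeDecomp

theorem stmt2_general {V ι : Type} [Fintype V] (G : SimpleGraph V)
    (T : SimpleGraph ι) (bags : ι → Finset V) (k : ℕ)
    (hdec : IsTreeDecomp G T bags)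
    (hwidth : ∀ i, (bags i).card ≤ k + 1) :
    (∃ i : ι, USep G (↑(bags i)) (1/2)) ∧
      ∃ S : Finset V, S.card ≤ k + 1 ∧ USep G (↑S) (1/2) := by
  choose t ht using hdec.2.1
  obtain ⟨c, hc⟩ := hdec.1.exists_centroid t
  have hsep : USep G (bags c) (1/2) := by
    intro v hv
    have hv : v ∉ bags c := by simpa using hv
    have hcomponent : {w | UReach G (bags c) v w} ⊆ {w | UReach T {c} (t v) (t w)} :=
      fun w hw => hdec.uReach_of_uReach hw hv (ht v) (ht w)
    have hhalf := (Nat.mul_le_mul_left 2 (Set.ncard_le_ncard hcomponent)).trans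
      (hc (t v) fun h => hv (h ▸ ht v))
    have hhalfℚ : (2 * {w | UReach G (bags c) v w}.ncard : ℚ) ≤ Fintype.card V := by
      exact_mod_cast hhalf
    linarith
  exact ⟨⟨c, hsep⟩, bags c, hwidth c, hsep⟩

theorem stmt2 {V ι : Type} [Fintype V] [Fintype ι] (G : SimpleGraph V)
    (T : SimpleGraph ι) (bags : ι → Finset V) (k : ℕ)
    (hdec : IsTreeDecomp G T bags)
    (hwidth : ∀ i, (bags i).card ≤ k + 1) :
    (∃ i : ι, USep G (↑(bags i)) (1/2)) ∧
      ∃ S : Finset V, S.card ≤ k + 1 ∧ USep G (↑S) (1/2) :=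
  stmt2_general G T bags k hdec hwidth
end

section
/- Let T be the lexicographically first DFS tree of a directed graph G rooted at r, with respect to a linear order ≺ on the vertices. Then for every vertex v reachable from r, the unique path from r to v in T is exactly the lexicographically least simple directed path from r to v in G with respect to ≺. -/
/-- The out-neighbours of `v` listed in increasing order of the linear order `≤`. -/
def succs {V : Type} [Fintype V] [LinearOrder V] (G : V → V → Prop) [DecidableRel G]
    (v : V) : List V :=
  (Finset.univ.filter fun w => G v w).sort (· ≤ ·)

/-- One run of depth first search, always exploring the least unvisited out-neighbour
first.  The state is a stack of pairs (vertex, remaining out-neighbours to try) and the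
set of visited vertices; the output is the list of tree edges. -/
def dfsRun {V : Type} [Fintype V] [LinearOrder V] (G : V → V → Prop) [DecidableRel G] :
    ℕ → List (V × List V) → Finset V → List (V × V)
  | 0, _, _ => []
  | _ + 1, [], _ => []
  | n + 1, (_, []) :: stk, vis => dfsRun G n stk vis
  | n + 1, (u, w :: ws) :: stk, vis =>
    if w ∈ vis then dfsRun G n ((u, ws) :: stk) vis
    else (u, w) :: dfsRun G n ((w, succs G w) :: (u, ws) :: stk) (insert w vis)

/-- The edges of the lexicographically first DFS tree of `G` rooted at `r`,
with respect to the linear order on `V`. -/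
def lexDFS {V : Type} [Fintype V] [LinearOrder V] (G : V → V → Prop) [DecidableRel G]
    (r : V) : List (V × V) :=
  dfsRun G ((Fintype.card V + 1) * (Fintype.card V + 1) * 4) [(r, succs G r)] {r}

theorem List.Lex.eq_append_or_exists {α : Type*} {R : α → α → Prop} {l₁ l₂ : List α}
    (h : List.Lex R l₁ l₂) :
    (∃ t ≠ [], l₂ = l₁ ++ t) ∨
      ∃ s a b t₁ t₂, l₁ = s ++ a :: t₁ ∧ l₂ = s ++ b :: t₂ ∧ R a b := by
  induction h with
  | nil => exact .inl ⟨_, List.cons_ne_nil _ _, rfl⟩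
  | @rel a t₁ b t₂ hab => exact .inr ⟨[], a, b, t₁, t₂, rfl, rfl, hab⟩
  | @cons c _ _ _ ih =>
    rcases ih with ⟨t, ht, rfl⟩ | ⟨s, a, b, t₁, t₂, rfl, rfl, hab⟩
    · exact .inl ⟨t, ht, rfl⟩
    · exact .inr ⟨c :: s, a, b, t₁, t₂, rfl, rfl, hab⟩

section Deterministic

variable {α : Type*} {R : α → α → Prop} {r : α}

theorem List.IsChain.eq_of_head?_eq_of_terminal (hdet : ∀ a b c, R a b → R a c → b = c)
    (hr : ∀ b, ¬ R r b) :
    ∀ {p q : List α}, p.IsChain R → q.IsChain R →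
      p.getLast? = some r → q.getLast? = some r → p.head? = q.head? → p = q
  | [], _, _, _, hp, _, _ => by simp at hp
  | _ :: _, [], _, _, _, hq, _ => by simp at hq
  | [_], [_], _, _, _, _, h0 => by simpa using h0
  | [a], b :: c :: q, _, hq, hp, _, h0 => by
    obtain rfl : a = r := by simpa using hp
    obtain rfl : a = b := by simpa using h0
    exact absurd (List.isChain_cons_cons.1 hq).1 (hr c)
  | a :: b :: p, [c], hp, _, _, hq, h0 => by
    obtain rfl : c = r := by simpa using hq
    obtain rfl : a = c := by simpa using h0
    exact absurd (List.isChain_cons_cons.1 hp).1 (hr b)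
  | a :: b :: p, c :: d :: q, hp, hq, hpr, hqr, h0 => by
    obtain rfl : a = c := by simpa using h0
    rw [List.isChain_cons_cons] at hp hq
    obtain rfl := hdet _ _ _ hp.1 hq.1
    rw [List.IsChain.eq_of_head?_eq_of_terminal hdet hr hp.2 hq.2 (by simpa using hpr)
      (by simpa using hqr) rfl]

theorem List.IsChain.eq_of_getLast?_eq_of_root (huniq : ∀ a a' b, R a b → R a' b → a = a')
    (hr : ∀ a, ¬ R a r) {p q : List α} (hp : p.IsChain R) (hq : q.IsChain R)
    (hp0 : p.head? = some r) (hq0 : q.head? = some r) (hlast : p.getLast? = q.getLast?) :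
    p = q := by
  rw [← List.reverse_inj]
  refine List.IsChain.eq_of_head?_eq_of_terminal (R := fun a b => R b a)
    (fun a b c hb hc => huniq b c a hb hc) hr (List.isChain_reverse.2 hp)
    (List.isChain_reverse.2 hq) ?_ ?_ ?_ <;> simpa

end Deterministic

section LexDFSTree

variable {V : Type} [LinearOrder V] {G : V → V → Prop} {r : V}

def reached (r : V) (E : List (V × V)) : Finset V :=
  insert r (E.map Prod.snd).toFinset

@[simp]
theorem mem_reached {E : List (V × V)} {z : V} :
    z ∈ reached r E ↔ z = r ∨ z ∈ E.map Prod.snd := by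
  simp [reached]

theorem reached_append_singleton (E : List (V × V)) (u w : V) :
    reached r (E ++ [(u, w)]) = insert w (reached r E) := by
  simp [reached, Finset.insert_comm]

theorem reached_subset_append (E F : List (V × V)) : reached r E ⊆ reached r (E ++ F) :=
  Finset.insert_subset_insert _ (by simp [List.toFinset_append])

theorem mem_reached_of_isChain {A : List (V × V)} {γ : List V}
    (hγ : γ.IsChain fun a b => (a, b) ∈ A) (hγ0 : γ.head? = some r) :
    ∀ z ∈ γ, z ∈ reached r A :=
  hγ.induction _ _
    (fun _ y hxy _ => mem_reached.2 (.inr (List.mem_map_of_mem (f := Prod.snd) hxy)))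
    fun hne => mem_reached.2 (.inl (by simpa [List.head?_eq_some_head hne] using hγ0))

variable (G r) in
/-- What the lex-first DFS knows when it adds the tree edge `(x, b)` after the tree edges `A`. -/
structure IsLexDFSEdge (A : List (V × V)) (x b : V) : Prop where
  adj : G x b
  not_mem : b ∉ reached r A
  mem_of_lt : ∀ a, G x a → a < b → a ∈ reached r A
  exists_path : ∃ γ : List V, (γ.IsChain fun a c => (a, c) ∈ A) ∧ γ.head? = some r ∧
    γ.getLast? = some x ∧ γ.Nodup ∧
    ∀ z ∈ reached r A, z ∉ γ → ∀ y, G z y → y ∈ reached r A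

variable (G r) in
def IsLexDFSEdgeList (T : List (V × V)) : Prop :=
  ∀ A x b B, T = A ++ (x, b) :: B → IsLexDFSEdge G r A x b

theorem IsLexDFSEdgeList.append_singleton {E : List (V × V)} {x b : V}
    (hE : IsLexDFSEdgeList G r E) (he : IsLexDFSEdge G r E x b) :
    IsLexDFSEdgeList G r (E ++ [(x, b)]) := by
  intro A x' b' B h
  rcases List.eq_nil_or_concat' B with rfl | ⟨B', e, rfl⟩
  · obtain ⟨rfl, hxb⟩ := List.append_inj' h rfl
    simp only [List.cons.injEq, Prod.mk.injEq, and_true] at hxb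
    obtain ⟨rfl, rfl⟩ := hxb
    exact he
  · rw [show A ++ (x', b') :: (B' ++ [e]) = (A ++ (x', b') :: B') ++ [e] by simp] at h
    exact hE A x' b' B' (List.append_inj' h rfl).1

theorem IsLexDFSEdge.src_mem_reached {A : List (V × V)} {x b : V} (he : IsLexDFSEdge G r A x b) :
    x ∈ reached r A := by
  obtain ⟨γ, hγ, hγ0, hγx, -⟩ := he.exists_path
  exact mem_reached_of_isChain hγ hγ0 x (List.mem_of_getLast? hγx)

section Ordered

variable {T : List (V × V)} (hT : IsLexDFSEdgeList G r T)
include hT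

theorem IsLexDFSEdgeList.adj {x y : V} (h : (x, y) ∈ T) : G x y := by
  obtain ⟨A, B, hsplit⟩ := List.append_of_mem h
  exact (hT A x y B hsplit).adj

theorem IsLexDFSEdgeList.ne_root {x y : V} (h : (x, y) ∈ T) : y ≠ r := by
  obtain ⟨A, B, hsplit⟩ := List.append_of_mem h
  rintro rfl
  exact (hT A x y B hsplit).not_mem (by simp)

theorem IsLexDFSEdgeList.eq_of_mem_of_mem {x x' y : V} (h : (x, y) ∈ T) (h' : (x', y) ∈ T) :
    x = x' := by
  obtain ⟨A, B, hsplit⟩ := List.append_of_mem h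
  have hy := (hT A x y B hsplit).not_mem
  rw [hsplit] at h'
  rcases List.mem_append.1 h' with hA | hB
  · exact absurd (mem_reached.2 (.inr (List.mem_map_of_mem (f := Prod.snd) hA))) hy
  rcases List.mem_cons.1 hB with hxy | hB
  · simp_all
  obtain ⟨C, D, rfl⟩ := List.append_of_mem hB
  refine absurd ?_ (hT (A ++ (x, y) :: C) x' y D (by simp [hsplit])).not_mem
  simp

theorem IsLexDFSEdgeList.parent_mem_reached {A B : List (V × V)} (hsplit : T = A ++ B)
    {x y : V} (h : (x, y) ∈ T) (hy : y ∈ reached r A) : x ∈ reached r A := by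
  rcases mem_reached.1 hy with rfl | hy
  · exact absurd rfl (hT.ne_root h)
  obtain ⟨x', hx'y⟩ : ∃ x', (x', y) ∈ A := by simpa using hy
  obtain rfl := hT.eq_of_mem_of_mem h (hsplit ▸ List.mem_append_left _ hx'y)
  obtain ⟨C, D, rfl⟩ := List.append_of_mem hx'y
  exact reached_subset_append C _ (hT C x y (D ++ B) (by simp [hsplit])).src_mem_reached

theorem IsLexDFSEdgeList.eq_of_isChain {p q : List V} (hp : p.IsChain fun a b => (a, b) ∈ T)
    (hq : q.IsChain fun a b => (a, b) ∈ T) (hp0 : p.head? = some r) (hq0 : q.head? = some r)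
    (hlast : p.getLast? = q.getLast?) : p = q :=
  List.IsChain.eq_of_getLast?_eq_of_root (R := fun a b => (a, b) ∈ T)
    (fun _ _ _ => hT.eq_of_mem_of_mem) (fun _ h => hT.ne_root h rfl) hp hq hp0 hq0 hlast

theorem IsLexDFSEdgeList.exists_path {v : V} (hv : v ∈ reached r T) :
    ∃ p, DIsPath (fun a b => (a, b) ∈ T) p ∧ p.head? = some r ∧ p.getLast? = some v := by
  rcases mem_reached.1 hv with rfl | hv
  · exact ⟨[v], ⟨by simp, by simp, List.isChain_singleton _⟩, rfl, rfl⟩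
  obtain ⟨x, hxv⟩ : ∃ x, (x, v) ∈ T := by simpa using hv
  obtain ⟨A, B, hsplit⟩ := List.append_of_mem hxv
  have he := hT A x v B hsplit
  obtain ⟨γ, hγ, hγ0, hγx, hγnd, -⟩ := he.exists_path
  have hvγ : v ∉ γ := fun h => he.not_mem (mem_reached_of_isChain hγ hγ0 v h)
  have hγne : γ ≠ [] := by rintro rfl; simp at hγ0
  refine ⟨γ ++ [v], ⟨by simp, ?_, ?_⟩, by simp [List.head?_append_of_ne_nil _ hγne, hγ0],
    by simp⟩
  · exact hγnd.append (List.nodup_singleton v) (List.disjoint_singleton.2 hvγ)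
  · refine List.isChain_append.2 ⟨hγ.imp fun a c h => ?_, List.isChain_singleton _, ?_⟩
    · simp [hsplit, h]
    · simp [hγx, hsplit]

theorem IsLexDFSEdgeList.not_lex_lt {p q : List V} (hp : DIsPath (fun a b => (a, b) ∈ T) p)
    (hp0 : p.head? = some r) (hq : DIsPath G q) (hq0 : q.head? = some r)
    (hlast : p.getLast? = q.getLast?) : ¬ List.Lex (· < ·) q p := by
  obtain ⟨-, hpnd, hpc⟩ := hp
  obtain ⟨hqne, hqnd, hqc⟩ := hq
  intro hlex
  rcases hlex.eq_append_or_exists with ⟨t, ht, rfl⟩ | ⟨s, a, b, q', p', rfl, rfl, hab⟩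
  · obtain ⟨v, hv⟩ := Option.ne_none_iff_exists'.1 (List.getLast?_eq_none_iff.not.2 hqne)
    rw [List.getLast?_append_of_ne_nil _ ht, hv] at hlast
    exact List.disjoint_of_nodup_append hpnd (List.mem_of_getLast? hv)
      (List.mem_of_getLast? hlast)
  have hs : s ≠ [] := by
    rintro rfl
    simp only [List.nil_append, List.head?_cons, Option.some.injEq] at hp0 hq0
    exact hab.ne (hq0.trans hp0.symm)
  obtain ⟨hsc, hbp, hub⟩ := List.isChain_append.1 hpc
  obtain ⟨-, haq, hua⟩ := List.isChain_append.1 hqc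
  replace hub := hub _ (List.getLast?_eq_some_getLast hs) _ rfl
  replace hua := hua _ (List.getLast?_eq_some_getLast hs) _ rfl
  obtain ⟨A, B, hsplit⟩ := List.append_of_mem hub
  have he := hT A _ b B hsplit
  obtain ⟨γ, hγ, hγ0, hγx, -, hclosed⟩ := he.exists_path
  obtain rfl : γ = s :=
    hT.eq_of_isChain (hγ.imp fun _ _ h => by simp [hsplit, h]) hsc hγ0
      (by simpa [List.head?_append_of_ne_nil _ hs] using hp0)
      (by rw [hγx, List.getLast?_eq_some_getLast hs])
  have hin : ∀ z ∈ a :: q', z ∈ reached r A :=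
    (List.IsChain.iff_mem.1 haq).induction _ _
      (fun x y ⟨hx, _, hxy⟩ hxA =>
        hclosed x hxA (List.disjoint_of_nodup_append hqnd · hx) y hxy)
      fun _ => he.mem_of_lt a hua hab
  have hout : ∀ z ∈ b :: p', z ∉ reached r A :=
    hbp.induction _ _ (fun x y hxy hx hy => hx (hT.parent_mem_reached hsplit hxy hy))
      fun _ => he.not_mem
  rw [List.getLast?_append_of_ne_nil _ (List.cons_ne_nil _ _),
    List.getLast?_append_of_ne_nil _ (List.cons_ne_nil _ _)] at hlast
  obtain ⟨v, hv⟩ : ∃ v, (a :: q').getLast? = some v := ⟨_, List.getLast?_cons⟩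
  exact hout v (List.mem_of_getLast? (hlast.trans hv)) (hin v (List.mem_of_getLast? hv))

end Ordered

end LexDFSTree

section Search

variable {V : Type} [Fintype V] [LinearOrder V] (G : V → V → Prop) [DecidableRel G]

theorem mem_succs {u y : V} : y ∈ succs G u ↔ G u y := by
  simp [succs]

theorem length_succs_le (u : V) : (succs G u).length ≤ Fintype.card V := by
  simpa [succs] using Finset.card_le_univ _

theorem mem_of_succs_eq_append {u a w : V} {pre ws : List V}
    (h : succs G u = pre ++ w :: ws) (ha : G u a) (haw : a < w) : a ∈ pre := by
  have hsorted : (pre ++ w :: ws).Pairwise (· ≤ ·) := h ▸ Finset.pairwise_sort _ _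
  rcases List.mem_append.1 (h ▸ (mem_succs G).2 ha) with ha | ha
  · exact ha
  rcases List.mem_cons.1 ha with rfl | ha
  · exact absurd haw (lt_irrefl a)
  · exact absurd ((List.pairwise_cons.1 (List.pairwise_append.1 hsorted).2.1).1 a ha)
      (not_le.2 haw)

variable {G} {r : V}

variable (G r) in
structure DFSInvariant (E : List (V × V)) (stk : List (V × List V)) : Prop where
  ordered : IsLexDFSEdgeList G r E
  -- the stack lists its top first, so it is the tree path from `r` read backwards
  chain : (stk.map Prod.fst).IsChain fun a b => (b, a) ∈ E
  nodup : (stk.map Prod.fst).Nodup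
  bottom : ∀ x ∈ (stk.map Prod.fst).getLast?, x = r
  subset : ∀ z ∈ stk.map Prod.fst, z ∈ reached r E
  scanned : ∀ f ∈ stk, ∃ pre, succs G f.1 = pre ++ f.2 ∧ ∀ a ∈ pre, a ∈ reached r E
  closed : ∀ z ∈ reached r E, z ∉ stk.map Prod.fst → ∀ y, G z y → y ∈ reached r E

theorem DFSInvariant.init : DFSInvariant G r [] [(r, succs G r)] where
  ordered A x b B h := by simp at h
  chain := List.isChain_singleton _
  nodup := List.nodup_singleton _
  bottom := by simp
  subset := by simp
  scanned := by simp
  closed := by simp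

variable {E : List (V × V)} {stk : List (V × List V)} {u w : V} {ws : List V}

theorem DFSInvariant.pop (h : DFSInvariant G r E ((u, []) :: stk)) :
    DFSInvariant G r E stk where
  ordered := h.ordered
  chain := h.chain.tail
  nodup := h.nodup.of_cons
  bottom x hx := h.bottom x <| by
    rw [Option.mem_def, List.map_cons, List.getLast?_cons, Option.mem_def.1 hx]; rfl
  subset z hz := h.subset z (List.mem_cons_of_mem _ hz)
  scanned f hf := h.scanned f (List.mem_cons_of_mem _ hf)
  closed z hz hzs y hzy := by
    by_cases hzu : z = u
    · subst hzu
      obtain ⟨pre, hpre, hmem⟩ := h.scanned _ List.mem_cons_self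
      exact hmem y (by simpa [hpre] using (mem_succs G).2 hzy)
    · exact h.closed z hz (by simp [hzu, hzs]) y hzy

theorem DFSInvariant.skip (h : DFSInvariant G r E ((u, w :: ws) :: stk))
    (hw : w ∈ reached r E) :
    DFSInvariant G r E ((u, ws) :: stk) where
  ordered := h.ordered
  chain := h.chain
  nodup := h.nodup
  bottom := h.bottom
  subset := h.subset
  scanned f hf := by
    rcases List.mem_cons.1 hf with rfl | hf
    · obtain ⟨pre, hpre, hmem⟩ := h.scanned _ List.mem_cons_self
      refine ⟨pre ++ [w], by simp [hpre], fun a ha => ?_⟩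
      rcases List.mem_append.1 ha with ha | ha
      · exact hmem a ha
      · exact List.mem_singleton.1 ha ▸ hw
    · exact h.scanned f (List.mem_cons_of_mem _ hf)
  closed := h.closed

theorem DFSInvariant.isLexDFSEdge (h : DFSInvariant G r E ((u, w :: ws) :: stk))
    (hw : w ∉ reached r E) :
    IsLexDFSEdge G r E u w := by
  obtain ⟨pre, hpre, hmem⟩ := h.scanned _ List.mem_cons_self
  obtain ⟨x, hx⟩ : ∃ x, (u :: stk.map Prod.fst).getLast? = some x :=
    ⟨_, List.getLast?_cons⟩
  refine ⟨(mem_succs G).1 (by simp [hpre]), hw,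
    fun a ha haw => hmem a (mem_of_succs_eq_append G hpre ha haw),
    (u :: stk.map Prod.fst).reverse, List.isChain_reverse.2 h.chain, ?_, by simp,
    List.nodup_reverse.2 h.nodup, fun z hz hzγ => h.closed z hz (hzγ ∘ List.mem_reverse.2)⟩
  rw [List.head?_reverse, hx, h.bottom x hx]

theorem DFSInvariant.push (h : DFSInvariant G r E ((u, w :: ws) :: stk))
    (hw : w ∉ reached r E) :
    DFSInvariant G r (E ++ [(u, w)]) ((w, succs G w) :: (u, ws) :: stk) where
  ordered := h.ordered.append_singleton (h.isLexDFSEdge hw)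
  chain := List.isChain_cons_cons.2 ⟨by simp, h.chain.imp fun a b hab => by simp [hab]⟩
  nodup := List.nodup_cons.2 ⟨fun hws => hw (h.subset w hws), h.nodup⟩
  bottom x hx := h.bottom x (by simpa using hx)
  subset z hz := by
    rw [reached_append_singleton]
    rcases List.mem_cons.1 hz with rfl | hz
    · exact Finset.mem_insert_self _ _
    · exact Finset.mem_insert_of_mem (h.subset z hz)
  scanned f hf := by
    rw [reached_append_singleton]
    rcases List.mem_cons.1 hf with rfl | hf
    · exact ⟨[], by simp, by simp⟩
    rcases List.mem_cons.1 hf with rfl | hf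
    · obtain ⟨pre, hpre, hmem⟩ := h.scanned _ List.mem_cons_self
      refine ⟨pre ++ [w], by simp [hpre], fun a ha => ?_⟩
      rcases List.mem_append.1 ha with ha | ha
      · exact Finset.mem_insert_of_mem (hmem a ha)
      · exact List.mem_singleton.1 ha ▸ Finset.mem_insert_self _ _
    · obtain ⟨pre, hpre, hmem⟩ := h.scanned f (List.mem_cons_of_mem _ hf)
      exact ⟨pre, hpre, fun a ha => Finset.mem_insert_of_mem (hmem a ha)⟩
  closed z hz hzs y hzy := by
    rw [reached_append_singleton] at hz ⊢
    simp only [List.map_cons, List.mem_cons, not_or] at hzs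
    rcases Finset.mem_insert.1 hz with rfl | hz
    · exact absurd rfl hzs.1
    · exact Finset.mem_insert_of_mem (h.closed z hz (by simpa using hzs.2) y hzy)

theorem DFSInvariant.mem_reached_of_reflTransGen (h : DFSInvariant G r E []) {v : V}
    (hv : Relation.ReflTransGen G r v) : v ∈ reached r E := by
  induction hv with
  | refl => simp
  | tail _ hyz ih => exact h.closed _ ih List.not_mem_nil _ hyz

/-- Every step of `dfsRun` decreases this: a push adds at most `card V + 1` to the first summand
and takes `card V + 2` from the second. -/
def dfsMeasure (stk : List (V × List V)) (vis : Finset V) : ℕ :=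
  (stk.map fun f => f.2.length + 1).sum + (Fintype.card V - vis.card) * (Fintype.card V + 2)

theorem dfsMeasure_push {vis : Finset V} (hw : w ∉ vis) :
    dfsMeasure ((w, succs G w) :: (u, ws) :: stk) (insert w vis) <
      dfsMeasure ((u, w :: ws) :: stk) vis := by
  have hcard := Finset.card_le_univ (insert w vis)
  rw [Finset.card_insert_of_notMem hw] at hcard
  obtain ⟨m, hm⟩ := Nat.exists_eq_add_of_le hcard
  have hsucc := length_succs_le G w
  simp only [dfsMeasure, List.map_cons, List.sum_cons, List.length_cons,
    Finset.card_insert_of_notMem hw, hm] at hsucc ⊢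
  rw [show vis.card + 1 + m - (vis.card + 1) = m by omega,
    show vis.card + 1 + m - vis.card = m + 1 by omega]
  nlinarith

theorem DFSInvariant.dfsRun {n : ℕ} (h : DFSInvariant G r E stk)
    (hn : dfsMeasure stk (reached r E) < n) :
    DFSInvariant G r (E ++ dfsRun G n stk (reached r E)) [] := by
  induction n generalizing E stk with
  | zero => omega
  | succ n ih =>
    match stk, h, hn with
    | [], h, _ => simpa [dfsRun] using h
    | (u, []) :: stk, h, hn =>
      simpa [dfsRun] using ih h.pop (by simp [dfsMeasure] at hn ⊢; omega)
    | (u, w :: ws) :: stk, h, hn =>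
      by_cases hw : w ∈ reached r E
      · simpa [dfsRun, hw] using ih (h.skip hw) (by simp [dfsMeasure] at hn ⊢; omega)
      · have := ih (h.push hw) (by
          rw [reached_append_singleton]; exact (dfsMeasure_push hw).trans_le (by omega))
        rw [reached_append_singleton] at this
        simpa [dfsRun, hw] using this

variable (G r) in
theorem dfsInvariant_lexDFS : DFSInvariant G r (lexDFS G r) [] := by
  have hr : reached r [] = {r} := by simp [reached]
  have hn : dfsMeasure [(r, succs G r)] (reached r []) <
      (Fintype.card V + 1) * (Fintype.card V + 1) * 4 := by
    have := length_succs_le G r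
    simp only [dfsMeasure, hr, Finset.card_singleton, List.map_cons, List.map_nil,
      List.sum_cons, List.sum_nil]
    nlinarith [Nat.sub_le (Fintype.card V) 1]
  simpa [hr, lexDFS] using DFSInvariant.init.dfsRun hn

end Search

theorem stmt8 {V : Type} [Fintype V] [LinearOrder V] (G : V → V → Prop) [DecidableRel G]
    (r v : V) (hreach : Relation.ReflTransGen G r v) :
    ∃ p : List V,
      -- p is the (unique) path from r to v in the lex-first DFS tree
      DIsPath (fun a b => (a, b) ∈ lexDFS G r) p ∧
      p.head? = some r ∧ p.getLast? = some v ∧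
      (∀ q : List V, DIsPath (fun a b => (a, b) ∈ lexDFS G r) q →
        q.head? = some r → q.getLast? = some v → q = p) ∧
      -- and p is exactly the lexicographically least simple directed r-v path in G
      DIsPath G p ∧
      (∀ q : List V, DIsPath G q → q.head? = some r → q.getLast? = some v →
        p = q ∨ List.Lex (· < ·) p q) := by
  have hinv := dfsInvariant_lexDFS G r
  have hT := hinv.ordered
  obtain ⟨p, hp, hp0, hpv⟩ := hT.exists_path (hinv.mem_reached_of_reflTransGen hreach)
  refine ⟨p, hp, hp0, hpv, fun q hq hq0 hqv => ?_,
    ⟨hp.1, hp.2.1, hp.2.2.imp fun _ _ => hT.adj⟩, fun q hq hq0 hqv => ?_⟩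
  · exact hT.eq_of_isChain hq.2.2 hp.2.2 hq0 hp0 (hqv.trans hpv.symm)
  · exact (not_lt.1 (hT.not_lex_lt hp hp0 hq hq0 (hpv.trans hqv.symm))).eq_or_lt
end

section
/- Let G be a directed graph with vertex linear order ≺ and root r. An edge (u,v) belongs to the lexicographically first DFS tree of G rooted at r if and only if (u,v) is the last edge of the lexicographically least simple directed path from r to v in G. -/
/-!
A search state (a stack of frames `(vertex, remaining candidates)` and a visited set) has a
frontier: the paths that follow the stack up to some frame and then branch off through one of
that frame's remaining candidates along unvisited vertices. The edges the search still outputs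
are exactly the last edges of the lexicographically least frontier paths to the various vertices.
A step preserves this: when the least remaining candidate `w` of the top frame is discovered,
the stack path extended by `w` is the least frontier path, and every other frontier path through
`w` is beaten by one that reaches `w` along the stack. Initially the frontier consists of all
simple paths from the root except `[r]`.
-/

section Paths

variable {V : Type} {G : V → V → Prop}

theorem DIsPath.of_suffix {p q : List V} (hq : DIsPath G q) (h : p <:+ q) (hp : p ≠ []) :
    DIsPath G p :=
  ⟨hp, hq.2.1.sublist h.sublist, hq.2.2.suffix h⟩

theorem dIsPath_cons_cons {a b : V} {q : List V} :
    DIsPath G (a :: b :: q) ↔ G a b ∧ a ∉ b :: q ∧ DIsPath G (b :: q) := by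
  constructor
  · rintro ⟨-, hnd, hch⟩
    obtain ⟨hab, hch⟩ := List.isChain_cons_cons.mp hch
    exact ⟨hab, (List.nodup_cons.mp hnd).1, List.cons_ne_nil _ _, (List.nodup_cons.mp hnd).2, hch⟩
  · rintro ⟨hab, ha, -, hnd, hch⟩
    exact ⟨List.cons_ne_nil _ _, List.nodup_cons.mpr ⟨ha, hnd⟩,
      List.isChain_cons_cons.mpr ⟨hab, hch⟩⟩

theorem DIsPath.eq_singleton {p : List V} {r : V} (hp : DIsPath G p) (hhead : p.head? = some r)
    (hlast : p.getLast? = some r) : p = [r] := by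
  obtain ⟨t, rfl⟩ := List.head?_eq_some_iff.mp hhead
  obtain _ | ⟨b, t⟩ := t
  · rfl
  · have hr : r ∈ b :: t := List.mem_of_getLast? (by simpa using hlast)
    exact absurd hr (List.nodup_cons.mp hp.2.1).1

end Paths

namespace LexDFS

variable {V : Type}

section ListOrder

variable [LinearOrder V]

theorem self_le_append (p q : List V) : p ≤ p ++ q :=
  not_lt.mp List.le_append_left

theorem append_cons_lt_append_cons (P : List V) {a b : V} (h : a < b) (s t : List V) :
    P ++ a :: s < P ++ b :: t :=
  List.append_left_lt (List.cons_lt_cons_iff.mpr (Or.inl h))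

def LeastPathEdge (S : Set (List V)) (u v : V) : Prop :=
  ∃ p₀, IsLeast {p ∈ S | p.getLast? = some v} (p₀ ++ [u, v])

theorem isLeast_sep_congr {α : Type*} [PartialOrder α] {S T : Set α} {P : α → Prop} {x : α}
    (hTS : T ⊆ S) (hcov : ∀ p ∈ S, P p → ∃ p' ∈ T, P p' ∧ p' ≤ p) :
    IsLeast {p ∈ S | P p} x ↔ IsLeast {p ∈ T | P p} x := by
  constructor
  · rintro ⟨⟨hxS, hx⟩, hmin⟩
    obtain ⟨x', hx'T, hx', hle⟩ := hcov x hxS hx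
    obtain rfl : x' = x := le_antisymm hle (hmin ⟨hTS hx'T, hx'⟩)
    exact ⟨⟨hx'T, hx'⟩, fun q hq => hmin ⟨hTS hq.1, hq.2⟩⟩
  · rintro ⟨⟨hxT, hx⟩, hmin⟩
    refine ⟨⟨hTS hxT, hx⟩, fun q ⟨hqS, hq⟩ => ?_⟩
    obtain ⟨q', hq'T, hq', hle⟩ := hcov q hqS hq
    exact (hmin ⟨hq'T, hq'⟩).trans hle

theorem leastPathEdge_iff_of_isLeast {S T : Set (List V)} {m₀ : List V} {a w : V}
    (hm : IsLeast S (m₀ ++ [a, w])) (hTS : T ⊆ S) (hT : ∀ p ∈ T, p.getLast? ≠ some w)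
    (hcov : ∀ p ∈ S, p.getLast? ≠ some w → ∃ p' ∈ T, p'.getLast? = p.getLast? ∧ p' ≤ p)
    (u v : V) :
    LeastPathEdge S u v ↔ (u, v) = (a, w) ∨ LeastPathEdge T u v := by
  by_cases hv : v = w
  · subst hv
    have hmv : IsLeast {p ∈ S | p.getLast? = some v} (m₀ ++ [a, v]) :=
      ⟨⟨hm.1, by simp⟩, fun q hq => hm.2 hq.1⟩
    constructor
    · rintro ⟨p₀, hp⟩
      exact Or.inl (by simpa using (List.append_inj' (hp.unique hmv) rfl).2)
    · rintro (h | ⟨p₀, hp⟩)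
      · obtain ⟨rfl, -⟩ := Prod.mk.inj h
        exact ⟨m₀, hmv⟩
      · exact absurd hp.1.2 (hT _ hp.1.1)
  · have hne : (u, v) ≠ (a, w) := fun h => hv (Prod.mk.inj h).2
    simp only [LeastPathEdge, hne, false_or]
    refine exists_congr fun p₀ => isLeast_sep_congr hTS fun p hp hpv => ?_
    obtain ⟨p', hp'T, hlast, hle⟩ := hcov p hp (by simpa [hpv] using hv)
    exact ⟨p', hp'T, hlast.trans hpv, hle⟩

theorem leastPathEdge_diff_singleton {S : Set (List V)} {x : V}
    (hS : ∀ p ∈ S, p.getLast? = some x → p = [x]) (u v : V) :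
    LeastPathEdge (S \ {[x]}) u v ↔ LeastPathEdge S u v := by
  by_cases hv : v = x
  · subst hv
    constructor
    · rintro ⟨p₀, hp⟩
      exact absurd (hS _ hp.1.1.1 hp.1.2) hp.1.1.2
    · rintro ⟨p₀, hp⟩
      simpa using congrArg List.length (hS _ hp.1.1 hp.1.2)
  · have hfib : {p ∈ S \ {[x]} | p.getLast? = some v} = {p ∈ S | p.getLast? = some v} := by
      ext p
      simp only [Set.mem_ofPred_eq, Set.mem_sdiff, Set.mem_singleton_iff]
      constructor
      · exact fun h => ⟨h.1.1, h.2⟩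
      · rintro ⟨hp, hpv⟩
        refine ⟨⟨hp, ?_⟩, hpv⟩
        rintro rfl
        exact hv (by simpa using hpv.symm)
    simp only [LeastPathEdge, hfib]

theorem leastPathEdge_setOf_iff {Q : List V → Prop} {u v : V} :
    LeastPathEdge {p | Q p} u v ↔ ∃ p, Q p ∧ p.getLast? = some v ∧
      (∀ q, Q q → q.getLast? = some v → p = q ∨ p < q) ∧ ∃ p₀, p = p₀ ++ [u, v] := by
  constructor
  · rintro ⟨p₀, ⟨hp, hv⟩, hmin⟩
    exact ⟨_, hp, hv, fun q hq hqv => eq_or_lt_of_le (hmin ⟨hq, hqv⟩), p₀, rfl⟩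
  · rintro ⟨p, hp, hv, hmin, p₀, rfl⟩
    exact ⟨p₀, ⟨hp, hv⟩, fun q ⟨hq, hqv⟩ => (hmin q hq hqv).elim le_of_eq le_of_lt⟩

end ListOrder

section Frontier

variable {G : V → V → Prop}

def stackPath (stk : List (V × List V)) : List V := (stk.map Prod.fst).reverse

@[simp] theorem stackPath_nil : stackPath ([] : List (V × List V)) = [] := rfl

@[simp] theorem stackPath_cons (e : V × List V) (stk : List (V × List V)) :
    stackPath (e :: stk) = stackPath stk ++ [e.1] := by
  simp [stackPath]

variable (G) in
def branches (P l : List V) (vis : Finset V) : Set (List V) :=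
  {p | ∃ w ∈ l, ∃ q, p = P ++ w :: q ∧ DIsPath G (w :: q) ∧ ∀ x ∈ w :: q, x ∉ vis}

variable (G) in
/-- The paths the search can still discover from a given state. -/
def frontier : List (V × List V) → Finset V → Set (List V)
  | [], _ => ∅
  | (u, l) :: stk, vis => branches G (stackPath stk ++ [u]) l vis ∪ frontier stk vis

theorem mem_branches_singleton {P p : List V} {w : V} {vis : Finset V} :
    p ∈ branches G P [w] vis ↔
      ∃ q, p = P ++ w :: q ∧ DIsPath G (w :: q) ∧ ∀ x ∈ w :: q, x ∉ vis := by
  simp [branches]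

@[simp] theorem branches_nil (P : List V) (vis : Finset V) : branches G P [] vis = ∅ := by
  simp [branches]

theorem branches_cons (P : List V) (w : V) (l : List V) (vis : Finset V) :
    branches G P (w :: l) vis = branches G P [w] vis ∪ branches G P l vis := by
  ext p
  simp only [branches, List.mem_cons, Set.mem_union, Set.mem_ofPred_eq]
  grind

theorem branches_singleton_of_mem {P : List V} {w : V} {vis : Finset V} (hw : w ∈ vis) :
    branches G P [w] vis = ∅ := by
  ext p
  simp only [mem_branches_singleton, Set.mem_empty_iff_false, iff_false]
  rintro ⟨q, -, -, hq⟩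
  exact hq w List.mem_cons_self hw

theorem frontier_cons_cons (u w : V) (l : List V) (stk : List (V × List V)) (vis : Finset V) :
    frontier G ((u, w :: l) :: stk) vis =
      branches G (stackPath stk ++ [u]) [w] vis ∪ frontier G ((u, l) :: stk) vis := by
  rw [frontier, frontier, branches_cons, Set.union_assoc]

theorem frontier_anti {stk : List (V × List V)} {vis vis' : Finset V} (h : vis ⊆ vis') :
    frontier G stk vis' ⊆ frontier G stk vis := by
  induction stk with
  | nil => exact subset_rfl
  | cons e stk ih =>
    refine Set.union_subset_union ?_ ih
    rintro p ⟨w, hw, q, rfl, hq, hvis⟩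
    exact ⟨w, hw, q, rfl, hq, fun x hx hxv => hvis x hx (h hxv)⟩

theorem mem_frontier_insert [DecidableEq V] {stk : List (V × List V)} {vis : Finset V}
    {p : List V} {w : V} (hp : p ∈ frontier G stk vis) (hwp : w ∉ p) :
    p ∈ frontier G stk (insert w vis) := by
  induction stk with
  | nil => exact hp
  | cons e stk ih =>
    rcases hp with ⟨w', hw', q, rfl, hq, hvis⟩ | hp
    · refine Or.inl ⟨w', hw', q, rfl, hq, fun x hx hxv => ?_⟩
      rcases Finset.mem_insert.mp hxv with rfl | hxv
      · exact hwp (List.mem_append_right _ hx)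
      · exact hvis x hx hxv
    · exact Or.inr (ih hp)

theorem getLast_notMem_of_mem_frontier {stk : List (V × List V)} {vis : Finset V} {p : List V}
    {v : V} (hp : p ∈ frontier G stk vis) (hv : p.getLast? = some v) : v ∉ vis := by
  induction stk with
  | nil => exact hp.elim
  | cons e stk ih =>
    rcases hp with ⟨w, -, q, rfl, -, hvis⟩ | hp
    · rw [List.getLast?_append_of_ne_nil _ (List.cons_ne_nil w q)] at hv
      exact hvis v (List.mem_of_getLast? hv)
    · exact ih hp

theorem exists_eq_append_of_mem_frontier {stk : List (V × List V)} {vis : Finset V}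
    {p : List V} {w : V} (hstk : ∀ x ∈ stackPath stk, x ∈ vis) (hp : p ∈ frontier G stk vis)
    (hwp : w ∈ p) (hw : w ∉ vis) :
    ∃ s q, p = s ++ w :: q ∧ DIsPath G (w :: q) ∧ ∀ x ∈ w :: q, x ∉ vis := by
  induction stk with
  | nil => exact hp.elim
  | cons e stk ih =>
    rcases hp with ⟨w', -, q', rfl, hq', hvis⟩ | hp
    · have hwq' : w ∈ w' :: q' := by
        rcases List.mem_append.mp hwp with hwP | hwq'
        · exact absurd (hstk w (by simpa using hwP)) hw
        · exact hwq'
      obtain ⟨s, q, hsplit⟩ := List.append_of_mem hwq'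
      have hsuf : w :: q <:+ w' :: q' := ⟨s, hsplit.symm⟩
      refine ⟨stackPath stk ++ [e.1] ++ s, q, by rw [hsplit]; simp,
        hq'.of_suffix hsuf (List.cons_ne_nil w q), fun x hx => hvis x (hsuf.subset hx)⟩
    · exact ih (fun x hx => hstk x (by simp [hx])) hp

variable [LinearOrder V]

structure StackInv (stk : List (V × List V)) (vis : Finset V) : Prop where
  sorted : ∀ e ∈ stk, e.2.Pairwise (· < ·)
  chain : stk.IsChain fun a b => ∀ x ∈ b.2, a.1 < x
  visited : ∀ x ∈ stackPath stk, x ∈ vis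

theorem StackInv.pop {e : V × List V} {stk : List (V × List V)} {vis : Finset V}
    (h : StackInv (e :: stk) vis) : StackInv stk vis :=
  ⟨fun e' he' => h.sorted e' (List.mem_cons_of_mem _ he'), h.chain.tail,
    fun x hx => h.visited x (by simp [hx])⟩

theorem StackInv.skip {u w : V} {l : List V} {stk : List (V × List V)} {vis : Finset V}
    (h : StackInv ((u, w :: l) :: stk) vis) : StackInv ((u, l) :: stk) vis := by
  refine ⟨?_, ?_, fun x hx => h.visited x (by simpa using hx)⟩
  · rintro e (_ | ⟨_, he⟩)
    · exact (h.sorted _ List.mem_cons_self).of_cons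
    · exact h.sorted e (List.mem_cons_of_mem _ he)
  · cases stk with
    | nil => exact List.isChain_singleton _
    | cons b stk => exact List.isChain_cons_cons.mpr (List.isChain_cons_cons.mp h.chain)

/-- Frontier paths below a frame `(a, l)` branch off the stack path at a lower frame, towards a
candidate above `a`. -/
theorem lt_of_mem_frontier {a : V} {l : List V} {stk : List (V × List V)} {vis : Finset V}
    {p : List V} (hchain : ((a, l) :: stk).IsChain fun a b => ∀ x ∈ b.2, a.1 < x)
    (hp : p ∈ frontier G stk vis) (c : List V) : stackPath stk ++ a :: c < p := by
  induction stk generalizing a l c with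
  | nil => exact hp.elim
  | cons e stk ih =>
    obtain ⟨hlt, hchain⟩ := List.isChain_cons_cons.mp hchain
    rcases hp with ⟨w, hw, q, rfl, -⟩ | hp
    · simpa using append_cons_lt_append_cons (stackPath stk ++ [e.1]) (hlt w hw) c q
    · simpa using ih hchain hp (a :: c)

theorem lt_of_mem_frontier_cons {u w : V} {l : List V} {stk : List (V × List V)}
    {vis : Finset V} {p : List V} (hsort : (w :: l).Pairwise (· < ·))
    (hchain : ((u, w :: l) :: stk).IsChain fun a b => ∀ x ∈ b.2, a.1 < x)
    (hp : p ∈ frontier G ((u, l) :: stk) vis) (c : List V) :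
    stackPath stk ++ [u] ++ w :: c < p := by
  rcases hp with ⟨w', hw', q, rfl, -⟩ | hp
  · exact append_cons_lt_append_cons _ (List.rel_of_pairwise_cons hsort hw') c q
  · simpa using lt_of_mem_frontier hchain hp (w :: c)

theorem isLeast_frontier {u w : V} {l : List V} {stk : List (V × List V)} {vis : Finset V}
    (hinv : StackInv ((u, w :: l) :: stk) vis) (hw : w ∉ vis) :
    IsLeast (frontier G ((u, w :: l) :: stk) vis) (stackPath stk ++ [u, w]) := by
  rw [frontier_cons_cons]
  refine ⟨Or.inl (mem_branches_singleton.mpr ⟨[], by simp, ?_, by simpa using hw⟩), ?_⟩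
  · exact ⟨List.cons_ne_nil _ _, List.nodup_singleton w, List.isChain_singleton w⟩
  rintro p (hp | hp)
  · obtain ⟨q, rfl, -⟩ := mem_branches_singleton.mp hp
    simpa using self_le_append (stackPath stk ++ [u, w]) q
  · simpa using
      (lt_of_mem_frontier_cons (hinv.sorted _ List.mem_cons_self) hinv.chain hp []).le

end Frontier

section Search

variable [Fintype V] [LinearOrder V] {G : V → V → Prop} [DecidableRel G]

theorem mem_succs {v w : V} : w ∈ succs G v ↔ G v w := by
  simp [succs]

theorem pairwise_succs (v : V) : (succs G v).Pairwise (· < ·) :=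
  (Finset.sortedLT_sort _).pairwise

theorem length_succs_le (v : V) : (succs G v).length ≤ Fintype.card V := by
  rw [succs, Finset.length_sort]
  exact Finset.card_le_univ _

theorem branches_succs (P : List V) {w : V} {vis : Finset V} (hw : w ∉ vis) :
    branches G (P ++ [w]) (succs G w) (insert w vis) = branches G P [w] vis \ {P ++ [w]} := by
  ext p
  simp only [Set.mem_sdiff, Set.mem_singleton_iff, mem_branches_singleton]
  constructor
  · rintro ⟨w₂, hw₂, q, rfl, hq, hvis⟩
    have hpath : DIsPath G (w :: w₂ :: q) := dIsPath_cons_cons.mpr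
      ⟨mem_succs.mp hw₂, fun h => hvis w h (Finset.mem_insert_self w vis), hq⟩
    refine ⟨⟨w₂ :: q, by simp, hpath, ?_⟩, by simp⟩
    rintro x (_ | ⟨_, hx⟩)
    · exact hw
    · exact fun hxv => hvis x hx (Finset.mem_insert_of_mem hxv)
  · rintro ⟨⟨_ | ⟨w₂, q⟩, rfl, hq, hvis⟩, hne⟩
    · exact absurd rfl hne
    · obtain ⟨hw₂, hwq, hq⟩ := dIsPath_cons_cons.mp hq
      refine ⟨w₂, mem_succs.mpr hw₂, q, by simp, hq, fun x hx hxv => ?_⟩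
      rcases Finset.mem_insert.mp hxv with rfl | hxv
      · exact hwq hx
      · exact hvis x (List.mem_cons_of_mem _ hx) hxv

theorem StackInv.push {u w : V} {l : List V} {stk : List (V × List V)} {vis : Finset V}
    (h : StackInv ((u, w :: l) :: stk) vis) :
    StackInv ((w, succs G w) :: (u, l) :: stk) (insert w vis) := by
  refine ⟨?_, ?_, ?_⟩
  · rintro e (_ | ⟨_, he⟩)
    · exact pairwise_succs w
    · exact h.skip.sorted e he
  · exact List.isChain_cons_cons.mpr
      ⟨(List.pairwise_cons.mp (h.sorted _ List.mem_cons_self)).1, h.skip.chain⟩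
  · intro x hx
    simp only [stackPath_cons, List.mem_append, List.mem_singleton] at hx
    rcases hx with hx | rfl
    · exact Finset.mem_insert_of_mem (h.visited x (by simpa using hx))
    · exact Finset.mem_insert_self x vis

theorem frontier_push {u w : V} {l : List V} {stk : List (V × List V)} {vis : Finset V}
    (hw : w ∉ vis) :
    frontier G ((w, succs G w) :: (u, l) :: stk) (insert w vis) =
      (branches G (stackPath stk ++ [u]) [w] vis \ {stackPath stk ++ [u] ++ [w]}) ∪
        frontier G ((u, l) :: stk) (insert w vis) := by
  rw [frontier, ← branches_succs _ hw, stackPath_cons]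

theorem exists_le_of_mem_frontier_push {u w : V} {l : List V} {stk : List (V × List V)}
    {vis : Finset V} (hinv : StackInv ((u, w :: l) :: stk) vis) (hw : w ∉ vis) {p : List V}
    (hp : p ∈ frontier G ((u, w :: l) :: stk) vis) (hpw : p.getLast? ≠ some w) :
    ∃ p' ∈ frontier G ((w, succs G w) :: (u, l) :: stk) (insert w vis),
      p'.getLast? = p.getLast? ∧ p' ≤ p := by
  rw [frontier_push hw]
  rw [frontier_cons_cons] at hp
  rcases hp with hp | hp
  · refine ⟨p, Or.inl ⟨hp, ?_⟩, rfl, le_rfl⟩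
    rintro rfl
    simp at hpw
  by_cases hwp : w ∈ p
  · -- reach `w` along the stack instead, then follow the end of `p`
    obtain ⟨s, q, rfl, hq, hvis⟩ := exists_eq_append_of_mem_frontier
      (fun x hx => hinv.visited x (by simpa using hx)) hp hwp hw
    refine ⟨stackPath stk ++ [u] ++ w :: q,
      Or.inl ⟨mem_branches_singleton.mpr ⟨q, rfl, hq, hvis⟩, ?_⟩, ?_,
      (lt_of_mem_frontier_cons (hinv.sorted _ List.mem_cons_self) hinv.chain hp q).le⟩
    · intro hq
      obtain rfl : q = [] := by simpa using hq
      simp at hpw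
    · simp only [List.getLast?_append_of_ne_nil _ (List.cons_ne_nil w q)]
  · exact ⟨p, Or.inr (mem_frontier_insert hp hwp), rfl, le_rfl⟩

theorem leastPathEdge_frontier_push {u w : V} {l : List V} {stk : List (V × List V)}
    {vis : Finset V} (hinv : StackInv ((u, w :: l) :: stk) vis) (hw : w ∉ vis) (a b : V) :
    LeastPathEdge (frontier G ((u, w :: l) :: stk) vis) a b ↔
      (a, b) = (u, w) ∨
        LeastPathEdge (frontier G ((w, succs G w) :: (u, l) :: stk) (insert w vis)) a b := by
  refine leastPathEdge_iff_of_isLeast (isLeast_frontier hinv hw) ?_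
    (fun p hp hpw => getLast_notMem_of_mem_frontier hp hpw (Finset.mem_insert_self w vis))
    (fun p hp hpw => exists_le_of_mem_frontier_push hinv hw hp hpw) a b
  rw [frontier_push hw, frontier_cons_cons]
  exact Set.union_subset_union Set.sdiff_subset (frontier_anti (Finset.subset_insert w vis))

/-- A push adds at most `Fintype.card V + 1` to the stack part but visits a new vertex. -/
def searchMeasure (stk : List (V × List V)) (vis : Finset V) : ℕ :=
  (stk.map fun e => e.2.length + 1).sum + (Fintype.card V + 2) * visᶜ.card

theorem searchMeasure_push {u w : V} {l : List V} {stk : List (V × List V)} {vis : Finset V}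
    (hw : w ∉ vis) :
    searchMeasure ((w, succs G w) :: (u, l) :: stk) (insert w vis) <
      searchMeasure ((u, w :: l) :: stk) vis := by
  have hcard : visᶜ.card = (insert w vis)ᶜ.card + 1 := by
    rw [Finset.compl_insert, Finset.card_erase_add_one (Finset.mem_compl.mpr hw)]
  have := length_succs_le (G := G) w
  simp only [searchMeasure, List.map_cons, List.sum_cons, List.length_cons, hcard]
  nlinarith

theorem searchMeasure_init (r : V) :
    searchMeasure [(r, succs G r)] {r} ≤ (Fintype.card V + 1) * (Fintype.card V + 1) * 4 := by
  have := length_succs_le (G := G) r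
  have : ({r}ᶜ : Finset V).card ≤ Fintype.card V := Finset.card_le_univ _
  simp only [searchMeasure, List.map_cons, List.map_nil, List.sum_cons, List.sum_nil]
  nlinarith

theorem mem_dfsRun_iff {n : ℕ} {stk : List (V × List V)} {vis : Finset V}
    (hinv : StackInv stk vis) (hn : searchMeasure stk vis ≤ n) (u v : V) :
    (u, v) ∈ dfsRun G n stk vis ↔ LeastPathEdge (frontier G stk vis) u v := by
  induction n generalizing stk vis with
  | zero =>
    obtain rfl : stk = [] := by
      cases stk with
      | nil => rfl
      | cons e stk => simp [searchMeasure] at hn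
    simp [dfsRun, frontier, LeastPathEdge, IsLeast]
  | succ n ih =>
    obtain _ | ⟨⟨vk, _ | ⟨w, ws⟩⟩, rest⟩ := stk
    · simp [dfsRun, frontier, LeastPathEdge, IsLeast]
    · rw [dfsRun, frontier, branches_nil, Set.empty_union]
      exact ih hinv.pop (by simp [searchMeasure] at hn ⊢; omega)
    by_cases hw : w ∈ vis
    · rw [dfsRun, if_pos hw, frontier_cons_cons, branches_singleton_of_mem hw, Set.empty_union]
      exact ih hinv.skip (by simp [searchMeasure] at hn ⊢; omega)
    · have hn' := (searchMeasure_push (G := G) hw).trans_le hn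
      rw [dfsRun, if_neg hw, List.mem_cons, leastPathEdge_frontier_push hinv hw,
        ih hinv.push (Nat.le_of_lt_succ hn')]

theorem frontier_init (r : V) :
    frontier G [(r, succs G r)] {r} = {p | DIsPath G p ∧ p.head? = some r} \ {[r]} := by
  ext p
  simp only [frontier, stackPath_nil, List.nil_append, Set.union_empty, Set.mem_sdiff,
    Set.mem_singleton_iff, Set.mem_ofPred_eq]
  constructor
  · rintro ⟨w, hw, q, rfl, hq, hvis⟩
    refine ⟨⟨dIsPath_cons_cons.mpr ⟨mem_succs.mp hw, ?_, hq⟩, rfl⟩, by simp⟩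
    exact fun h => hvis r h (Finset.mem_singleton_self r)
  · rintro ⟨⟨hp, hhead⟩, hne⟩
    obtain ⟨t, rfl⟩ := List.head?_eq_some_iff.mp hhead
    obtain _ | ⟨w, q⟩ := t
    · exact absurd rfl hne
    obtain ⟨hrw, hrq, hq⟩ := dIsPath_cons_cons.mp hp
    refine ⟨w, mem_succs.mpr hrw, q, rfl, hq, fun x hx hxr => ?_⟩
    rw [Finset.mem_singleton.mp hxr] at hx
    exact hrq hx

end Search

end LexDFS

open LexDFS

theorem stmt9 {V : Type} [Fintype V] [LinearOrder V] (G : V → V → Prop) [DecidableRel G]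
    (r u v : V) :
    (u, v) ∈ lexDFS G r ↔
      ∃ p : List V,
        -- p is the lexicographically least simple directed path from r to v in G
        DIsPath G p ∧ p.head? = some r ∧ p.getLast? = some v ∧
        (∀ q : List V, DIsPath G q → q.head? = some r → q.getLast? = some v →
          p = q ∨ List.Lex (· < ·) p q) ∧
        -- and (u, v) is the last edge of p
        (∃ q : List V, p = q ++ [u, v]) := by
  have hinit : StackInv [(r, succs G r)] {r} :=
    ⟨by simpa using pairwise_succs r, List.isChain_singleton _, by simp⟩
  rw [lexDFS, mem_dfsRun_iff hinit (searchMeasure_init r), frontier_init,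
    leastPathEdge_diff_singleton fun p hp => hp.1.eq_singleton hp.2, leastPathEdge_setOf_iff]
  simp only [and_imp, and_assoc]
  -- `<` on `List V` is `List.Lex (· < ·)`
  rfl
end

section
/- Let G be a connected undirected graph with a vertex r, and consider the block-cut tree of G rooted at the block containing r. Let H be a block corresponding to a leaf node, with articulation vertex r' (or any vertex r' = r if G is 2-connected). If P0 is a simple path in G from r to r' whose internal vertices avoid V(H) \ {r'}, and P1 is a maximal path of H starting at r', then the concatenation P0·P1 is a maximal path of G starting at r. -/
namespace SimpleGraph.Walk

variable {V : Type*} {G : SimpleGraph V}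

theorem IsPath.append {u v w : V} {p : G.Walk u v} {q : G.Walk v w} (hp : p.IsPath)
    (hq : q.IsPath) (hpq : ∀ a ∈ p.support, a ∈ q.support → a = v) : (p.append q).IsPath := by
  rw [isPath_def, support_append]
  refine hp.support_nodup.append hq.support_nodup.tail fun a hap haq => ?_
  obtain rfl := hpq a hap (List.mem_of_mem_tail haq)
  have hq' := hq.support_nodup
  rw [← cons_tail_support] at hq'
  exact (List.nodup_cons.mp hq').1 haq

theorem IsPath.ne_start_of_maximal {H : Set V} {u x z : V} {p : G.Walk u x} (hp : p.IsPath)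
    (hmax : ∀ y ∈ H, G.Adj x y → y ∈ p.support) (hz : z ∈ H) (huz : G.Adj u z) : x ≠ u := by
  rintro rfl
  obtain rfl := (isPath_iff_nil.mp hp).eq_nil
  obtain rfl : z = x := by simpa using hmax z hz huz
  exact G.loopless.irrefl _ huz

theorem IsPath.adj_mem_support_of_maximal_of_attach {H : Set V} {r' x y : V} {p : G.Walk r' x}
    (hp : p.IsPath) (hattach : ∀ a b : V, G.Adj a b → a ∈ H → a ≠ r' → b ∈ H)
    (hr' : ∃ z ∈ H, G.Adj r' z) (hx : x ∈ H) (hmax : ∀ y ∈ H, G.Adj x y → y ∈ p.support)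
    (hxy : G.Adj x y) : y ∈ p.support := by
  obtain ⟨z, hz, hr'z⟩ := hr'
  exact hmax y (hattach x y hxy hx (hp.ne_start_of_maximal hmax hz hr'z)) hxy

end SimpleGraph.Walk

theorem stmt11_general {V : Type} (G : SimpleGraph V)
    (H : Set V) (r r' x : V)
    -- H is a leaf block, attached to the rest of G only through the cut vertex r'
    (hattach : ∀ a b : V, G.Adj a b → a ∈ H → a ≠ r' → b ∈ H)
    (hHedge : ∃ y ∈ H, G.Adj r' y)
    -- P0 : a simple path from r to r' whose internal vertices avoid H \ {r'}
    (p0 : G.Walk r r') (hp0 : p0.IsPath)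
    (hp0int : ∀ v ∈ p0.support, v ∈ H → v = r')
    -- P1 : a maximal path of H starting at r', ending at x
    (p1 : G.Walk r' x) (hp1 : p1.IsPath)
    (hp1H : ∀ v ∈ p1.support, v ∈ H)
    (hp1max : ∀ y ∈ H, G.Adj x y → y ∈ p1.support) :
    -- the concatenation P0·P1 is a maximal path of G starting at r
    (p0.append p1).IsPath ∧ ∀ y : V, G.Adj x y → y ∈ (p0.append p1).support := by
  refine ⟨hp0.append hp1 fun a ha0 ha1 => hp0int a ha0 (hp1H a ha1), fun y hxy => ?_⟩
  rw [SimpleGraph.Walk.mem_support_append_iff]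
  exact Or.inr <| hp1.adj_mem_support_of_maximal_of_attach hattach hHedge
    (hp1H x p1.end_mem_support) hp1max hxy

theorem stmt11 {V : Type} [Fintype V] (G : SimpleGraph V) (hconn : G.Connected)
    (H : Set V) (r r' x : V) (hr' : r' ∈ H) (hrH : r ∉ H \ {r'})
    -- H is a leaf block, attached to the rest of G only through the cut vertex r'
    (hattach : ∀ a b : V, G.Adj a b → a ∈ H → a ≠ r' → b ∈ H)
    (hHedge : ∃ y ∈ H, G.Adj r' y)
    -- P0 : a simple path from r to r' whose internal vertices avoid H \ {r'}
    (p0 : G.Walk r r') (hp0 : p0.IsPath)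
    (hp0int : ∀ v ∈ p0.support, v ∈ H → v = r')
    -- P1 : a maximal path of H starting at r', ending at x
    (p1 : G.Walk r' x) (hp1 : p1.IsPath)
    (hp1H : ∀ v ∈ p1.support, v ∈ H)
    (hp1max : ∀ y ∈ H, G.Adj x y → y ∈ p1.support) :
    -- the concatenation P0·P1 is a maximal path of G starting at r
    (p0.append p1).IsPath ∧ ∀ y : V, G.Adj x y → y ∈ (p0.append p1).support :=
  stmt11_general G H r r' x hattach hHedge p0 hp0 hp0int p1 hp1 hp1H hp1max
end
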